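/- Let k be a field of characteristic not 2 and α ∈ k^×. Then α is a sum of squares in k^× if and only if there exist positive integers a, b with a⟨1⟩ = b⟨2,2α⟩ in GW(k). -/

import Mathlib

/-- The relations ideal defining the Grothendieck–Witt ring of a field `k`
(characteristic ≠ 2) by its standard presentation: generators `⟨a⟩` for
`a ∈ kˣ` (multiplicative via the group algebra), with relations
`⟨a²⟩ = 1` and the chain relation `⟨a⟩ + ⟨b⟩ = ⟨a+b⟩ + ⟨(a+b)ab⟩` when `a + b ≠ 0`. -/
noncomputable def GWIdeal (k : Type) [Field k] : Ideal (MonoidAlgebra ℤ kˣ) :=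
  Ideal.span { x | (∃ a : kˣ, x = MonoidAlgebra.of ℤ kˣ (a * a) - 1) ∨
    (∃ a b c : kˣ, ((a : k) + (b : k) = (c : k)) ∧
      x = MonoidAlgebra.of ℤ kˣ a + MonoidAlgebra.of ℤ kˣ b
        - MonoidAlgebra.of ℤ kˣ c - MonoidAlgebra.of ℤ kˣ (c * a * b)) }

/-- The Grothendieck–Witt ring of a field `k` of characteristic ≠ 2. -/
def GW (k : Type) [Field k] : Type := MonoidAlgebra ℤ kˣ ⧸ GWIdeal k

noncomputable instance (k : Type) [Field k] : CommRing (GW k) :=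
  Ideal.Quotient.commRing (GWIdeal k)

/-- The class `⟨a⟩` of the one-dimensional quadratic form `x ↦ a x²` in `GW k`. -/
noncomputable def GWform (k : Type) [Field k] (a : kˣ) : GW k :=
  Ideal.Quotient.mk (GWIdeal k) (MonoidAlgebra.of ℤ kˣ a)

/-!
If `α` is a sum of squares, so are `2` and `2α`; and for every nonzero sum of squares `u`, some
multiple `N(⟨u⟩ - 1)` vanishes in `GW(k)`, by induction on the number of squares using the chain
relation `⟨x²⟩ + ⟨t⟩ = ⟨x² + t⟩ + ⟨(x² + t)x²t⟩`. This gives `2mn⟨1⟩ = mn⟨2, 2α⟩`.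

Conversely, if `α` is not a sum of squares then (as `2 ≠ 0`) neither is `-1`, and Zorn's lemma
extends the preordering of sums of squares, with `-α` adjoined, to an ordering `P` of `k`. The
signature at `P` is a ring map `GW(k) → ℤ` sending `⟨1⟩` and `⟨2⟩` to `1` and `⟨2α⟩` to `-1`, so it
turns `a⟨1⟩ = b⟨2, 2α⟩` into `a = 0`.
-/

namespace GW

noncomputable def mk (k : Type) [Field k] : MonoidAlgebra ℤ kˣ →+* GW k :=
  Ideal.Quotient.mk (GWIdeal k)

variable {k : Type} [Field k]

theorem mk_eq_mk_iff {x y : MonoidAlgebra ℤ kˣ} : mk k x = mk k y ↔ x - y ∈ GWIdeal k :=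
  Ideal.Quotient.eq

theorem GWform_eq_mk (a : kˣ) : GWform k a = mk k (MonoidAlgebra.of ℤ kˣ a) := rfl

variable {R : Type*} [CommRing R]

noncomputable def lift (χ : kˣ →* R) (hsq : ∀ a, χ (a * a) = 1)
    (hchain : ∀ a b c : kˣ, (a : k) + b = c → χ a + χ b = χ c + χ (c * a * b)) :
    GW k →+* R :=
  Ideal.Quotient.lift (GWIdeal k) (MonoidAlgebra.lift ℤ R kˣ χ).toRingHom fun x hx => by
    refine (Ideal.span_le (I := RingHom.ker (MonoidAlgebra.lift ℤ R kˣ χ).toRingHom)).mpr ?_ hx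
    rintro _ (⟨a, rfl⟩ | ⟨a, b, c, h, rfl⟩)
    · simp [hsq]
    · simp [hchain a b c h]

theorem lift_GWform (χ : kˣ →* R) (hsq) (hchain) (a : kˣ) :
    lift χ hsq hchain (GWform k a) = χ a :=
  MonoidAlgebra.lift_of χ a

end GW

open GW

section GWform

variable {k : Type} [Field k]

theorem GWform_mul (a b : kˣ) : GWform k a * GWform k b = GWform k (a * b) := by
  simp only [GWform_eq_mk, ← map_mul]

theorem GWform_one : GWform k 1 = 1 := by
  rw [GWform_eq_mk, map_one, map_one]

theorem GWform_mul_self (a : kˣ) : GWform k (a * a) = 1 := by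
  rw [GWform_eq_mk, ← map_one (GW.mk k), mk_eq_mk_iff]
  exact Ideal.subset_span (Or.inl ⟨a, rfl⟩)

theorem GWform_add_GWform {a b c : kˣ} (h : (a : k) + b = c) :
    GWform k a + GWform k b = GWform k c + GWform k (c * a * b) := by
  simp only [GWform_eq_mk, ← map_add, mk_eq_mk_iff, sub_add_eq_sub_sub]
  exact Ideal.subset_span (Or.inr ⟨a, b, c, h, rfl⟩)

/-- `⟨1, t⟩` represents `u = x² + t`, hence is isometric to `⟨u, ut⟩`. -/
theorem GWform_mul_one_add_GWform {u x t : kˣ} (h : (u : k) = x * x + t) :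
    GWform k u * (1 + GWform k t) = 1 + GWform k t := by
  have chain := GWform_add_GWform (a := x * x) (b := t) (c := u) (by simp [h])
  rw [GWform_mul_self, ← GWform_mul, ← GWform_mul, GWform_mul_self, mul_one] at chain
  linear_combination -chain

theorem exists_natCast_mul_GWform_eq_of_isSumSq {u : kˣ} (hu : IsSumSq (u : k)) :
    ∃ N : ℕ, 0 < N ∧ (N : GW k) * GWform k u = N := by
  suffices ∀ s : k, IsSumSq s → ∀ u : kˣ, (u : k) = s →
      ∃ N : ℕ, 0 < N ∧ (N : GW k) * GWform k u = N from this _ hu u rfl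
  intro s hs
  induction hs with
  | zero => exact fun u hu => absurd hu u.ne_zero
  | @sq_add x t ht ih =>
    intro u hu
    by_cases hx : x = 0
    · exact ih u (by simpa [hx] using hu)
    by_cases ht0 : t = 0
    · refine ⟨1, one_pos, ?_⟩
      rw [show u = Units.mk0 x hx * Units.mk0 x hx by ext; simp [hu, ht0], GWform_mul_self, mul_one]
    obtain ⟨N, hN, hNt⟩ := ih (Units.mk0 t ht0) rfl
    refine ⟨2 * N, by positivity, ?_⟩
    have hrep := GWform_mul_one_add_GWform (u := u) (x := Units.mk0 x hx) (t := Units.mk0 t ht0)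
      (by simp [hu])
    push_cast
    linear_combination (N : GW k) * hrep + (1 - GWform k u) * hNt

end GWform

namespace RingPreordering

section CommRing

variable {R : Type*} [CommRing R]

def ofSumSq (h : ¬ IsSumSq (-1 : R)) : RingPreordering R where
  toSubsemiring := Subsemiring.sumSq R
  mem_of_isSquare' hx := Subsemiring.mem_sumSq.mpr hx.isSumSq
  neg_one_notMem' hneg := h (Subsemiring.mem_sumSq.mp hneg)

theorem mem_ofSumSq {h : ¬ IsSumSq (-1 : R)} {x : R} : x ∈ ofSumSq h ↔ IsSumSq x :=
  Subsemiring.mem_sumSq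

theorem bddAbove_of_isChain {c : Set (RingPreordering R)} (hc : IsChain (· ≤ ·) c)
    (hne : c.Nonempty) : BddAbove c := by
  have common : ∀ x ∈ ⋃ P ∈ c, (P : Set R), ∀ y ∈ ⋃ P ∈ c, (P : Set R),
      ∃ P ∈ c, x ∈ P ∧ y ∈ P := by
    intro x hx y hy
    obtain ⟨P, hP, hx⟩ := Set.mem_iUnion₂.mp hx
    obtain ⟨Q, hQ, hy⟩ := Set.mem_iUnion₂.mp hy
    rcases hc.total hP hQ with hPQ | hQP
    · exact ⟨Q, hQ, hPQ hx, hy⟩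
    · exact ⟨P, hP, hx, hQP hy⟩
  refine ⟨mk' (⋃ P ∈ c, (P : Set R)) ?add ?mul ?sq ?neg_one,
    fun P hP x hx => Set.mem_biUnion hP hx⟩
  case add =>
    intro x y hx hy
    obtain ⟨P, hP, hx, hy⟩ := common x hx y hy
    exact Set.mem_biUnion hP (add_mem hx hy)
  case mul =>
    intro x y hx hy
    obtain ⟨P, hP, hx, hy⟩ := common x hx y hy
    exact Set.mem_biUnion hP (mul_mem hx hy)
  case sq =>
    obtain ⟨P, hP⟩ := hne
    exact fun x => Set.mem_biUnion hP (P.mul_self_mem x)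
  case neg_one =>
    intro hneg
    obtain ⟨P, -, hP⟩ := Set.mem_iUnion₂.mp hneg
    exact P.neg_one_notMem hP

end CommRing

section Field

variable {F : Type*} [Field F]

theorem notMem_of_neg_mem (P : RingPreordering F) {x : F} (hx : x ≠ 0) (h : -x ∈ P) :
    x ∉ P :=
  fun h' => hx (RingPreordering.eq_zero_of_mem_of_neg_mem h' h)

def adjoin (P : RingPreordering F) {a : F} (ha : -a ∉ P) : RingPreordering F :=
  mk' {z | ∃ p ∈ P, ∃ q ∈ P, z = p + a * q}
    (by
      rintro _ _ ⟨p, hp, q, hq, rfl⟩ ⟨p', hp', q', hq', rfl⟩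
      exact ⟨p + p', add_mem hp hp', q + q', add_mem hq hq', by ring⟩)
    (by
      rintro _ _ ⟨p, hp, q, hq, rfl⟩ ⟨p', hp', q', hq', rfl⟩
      refine ⟨p * p' + a * a * (q * q'), ?_, p * q' + p' * q, ?_, by ring⟩
      · exact add_mem (mul_mem hp hp') (mul_mem (P.mul_self_mem a) (mul_mem hq hq'))
      · exact add_mem (mul_mem hp hq') (mul_mem hp' hq))
    (fun x => ⟨x * x, P.mul_self_mem x, 0, zero_mem P, by ring⟩)
    (by
      rintro ⟨p, hp, q, hq, hpq⟩
      by_cases hq0 : q = 0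
      · rw [hq0, mul_zero, add_zero] at hpq
        exact P.neg_one_notMem (hpq ▸ hp)
      · refine ha ?_
        have : -a = (1 + p) * q * (q⁻¹ * q⁻¹) := by
          field_simp
          linear_combination hpq
        rw [this]
        exact mul_mem (mul_mem (add_mem (one_mem P) hp) hq) (P.mul_self_mem _))

theorem le_adjoin (P : RingPreordering F) {a : F} (ha : -a ∉ P) : P ≤ adjoin P ha :=
  fun p hp => ⟨p, hp, 0, zero_mem P, by ring⟩

theorem mem_adjoin (P : RingPreordering F) {a : F} (ha : -a ∉ P) : a ∈ adjoin P ha :=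
  ⟨0, zero_mem P, 1, one_mem P, by ring⟩

theorem exists_le_hasMemOrNegMem (P : RingPreordering F) :
    ∃ Q : RingPreordering F, P ≤ Q ∧ HasMemOrNegMem Q := by
  obtain ⟨Q, hPQ, hQ⟩ := zorn_le_nonempty₀ Set.univ
    (fun c _ hc y hy => let ⟨ub, hub⟩ := bddAbove_of_isChain hc ⟨y, hy⟩; ⟨ub, trivial, hub⟩)
    P trivial
  refine ⟨Q, hPQ, ⟨fun a => or_iff_not_imp_right.mpr fun ha => ?_⟩⟩
  exact hQ.2 trivial (le_adjoin Q ha) (mem_adjoin Q ha)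

theorem isSumSq_of_isSumSq_neg_one (h2 : (2 : F) ≠ 0) (h : IsSumSq (-1 : F)) (x : F) :
    IsSumSq x := by
  have : x = (x + 1) / 2 * ((x + 1) / 2) + -1 * ((x - 1) / 2 * ((x - 1) / 2)) := by
    field_simp
    ring
  rw [this]
  exact (IsSumSq.mul_self _).add (h.mul (IsSumSq.mul_self _))

theorem exists_hasMemOrNegMem_notMem_of_not_isSumSq (h2 : (2 : F) ≠ 0) {a : F}
    (ha : ¬ IsSumSq a) : ∃ P : RingPreordering F, HasMemOrNegMem P ∧ a ∉ P := by
  have hneg : ¬ IsSumSq (-1 : F) := fun h => ha (isSumSq_of_isSumSq_neg_one h2 h a)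
  have hneg_a : -(-a) ∉ ofSumSq hneg := by rwa [neg_neg, mem_ofSumSq]
  obtain ⟨P, hle, htotal⟩ := exists_le_hasMemOrNegMem (adjoin (ofSumSq hneg) hneg_a)
  have ha0 : a ≠ 0 := by rintro rfl; exact ha .zero
  exact ⟨P, htotal, P.notMem_of_neg_mem ha0 (hle (mem_adjoin _ hneg_a))⟩

variable (P : RingPreordering F) [HasMemOrNegMem P]

open scoped Classical in
noncomputable def sign : Fˣ →* ℤ where
  toFun u := if (u : F) ∈ P then 1 else -1
  map_one' := if_pos (one_mem P)
  map_mul' u v := by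
    have sign_neg {x : F} (hx : x ≠ 0) (h : -x ∈ P) : (if x ∈ P then (1 : ℤ) else -1) = -1 :=
      if_neg (P.notMem_of_neg_mem hx h)
    have huv : (u : F) * v ≠ 0 := mul_ne_zero u.ne_zero v.ne_zero
    simp only [Units.val_mul]
    rcases mem_or_neg_mem P (u : F) with hu | hu <;>
      rcases mem_or_neg_mem P (v : F) with hv | hv
    · rw [if_pos hu, if_pos hv, if_pos (mul_mem hu hv), mul_one]
    · rw [if_pos hu, sign_neg v.ne_zero hv, sign_neg huv (by simpa using mul_mem hu hv), one_mul]
    · rw [if_pos hv, sign_neg u.ne_zero hu, sign_neg huv (by simpa using mul_mem hu hv), mul_one]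
    · rw [sign_neg u.ne_zero hu, sign_neg v.ne_zero hv, if_pos (by simpa using mul_mem hu hv)]
      rfl

theorem sign_apply_of_mem {u : Fˣ} (h : (u : F) ∈ P) : P.sign u = 1 := if_pos h

theorem sign_apply_of_notMem {u : Fˣ} (h : (u : F) ∉ P) : P.sign u = -1 := if_neg h

theorem sign_apply_of_neg_mem {u : Fˣ} (h : -(u : F) ∈ P) : P.sign u = -1 :=
  P.sign_apply_of_notMem (P.notMem_of_neg_mem u.ne_zero h)

theorem sign_add_sign {a b c : Fˣ} (h : (a : F) + b = c) :
    P.sign a + P.sign b = P.sign c + P.sign (c * a * b) := by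
  rw [map_mul, map_mul]
  rcases mem_or_neg_mem P (a : F) with ha | ha <;>
    rcases mem_or_neg_mem P (b : F) with hb | hb
  · have hc : (c : F) ∈ P := h ▸ add_mem ha hb
    rw [P.sign_apply_of_mem ha, P.sign_apply_of_mem hb, P.sign_apply_of_mem hc]
    rfl
  · rw [P.sign_apply_of_mem ha, P.sign_apply_of_neg_mem hb]
    ring
  · rw [P.sign_apply_of_neg_mem ha, P.sign_apply_of_mem hb]
    ring
  · have hc : -(c : F) ∈ P := by
      rw [← h, neg_add]
      exact add_mem ha hb
    rw [P.sign_apply_of_neg_mem ha, P.sign_apply_of_neg_mem hb, P.sign_apply_of_neg_mem hc]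
    rfl

end Field

end RingPreordering

namespace GW

variable {k : Type} [Field k]

noncomputable def signature (P : RingPreordering k) [HasMemOrNegMem P] : GW k →+* ℤ :=
  lift P.sign (fun a => P.sign_apply_of_mem (by simp))
    fun _ _ _ => P.sign_add_sign

theorem signature_GWform (P : RingPreordering k) [HasMemOrNegMem P] (a : kˣ) :
    signature P (GWform k a) = P.sign a :=
  lift_GWform _ _ _ a

end GW

/-- `α ∈ kˣ` is a sum of squares in `k` (char `k` ≠ 2) if and only if
`a⟨1⟩ = b⟨2, 2α⟩` in `GW(k)` for some positive integers `a, b`. -/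
theorem stmt5 (k : Type) [Field k] (h2 : (2 : k) ≠ 0) (α : kˣ) :
    IsSumSq (α : k) ↔
      ∃ a b : ℕ, 0 < a ∧ 0 < b ∧
        (a : ℤ) • GWform k 1 =
          (b : ℤ) •
            (GWform k (Units.mk0 (2 : k) h2) + GWform k (Units.mk0 (2 : k) h2 * α)) := by
  have h2sq : IsSumSq ((Units.mk0 (2 : k) h2 : kˣ) : k) := by
    simpa using IsSumSq.natCast (R := k) 2
  constructor
  · intro hα
    obtain ⟨m, hm, hm2⟩ := exists_natCast_mul_GWform_eq_of_isSumSq h2sq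
    obtain ⟨n, hn, hn2α⟩ := exists_natCast_mul_GWform_eq_of_isSumSq
      (u := Units.mk0 2 h2 * α) (by simpa using h2sq.mul hα)
    refine ⟨2 * (m * n), m * n, by positivity, by positivity, ?_⟩
    simp only [zsmul_eq_mul, GWform_one]
    push_cast
    linear_combination -(n : GW k) * hm2 - (m : GW k) * hn2α
  · rintro ⟨a, b, ha, -, hab⟩
    by_contra hα
    obtain ⟨P, _, hαP⟩ := RingPreordering.exists_hasMemOrNegMem_notMem_of_not_isSumSq h2 hα
    have hsign := congrArg (signature P) hab
    simp only [map_zsmul, map_add, signature_GWform, map_one, map_mul,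
      P.sign_apply_of_mem (P.mem_of_isSumSq h2sq), P.sign_apply_of_notMem hαP] at hsign
    norm_num at hsign
    omega
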